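/- arXiv:math/9502203 — 2 statements merged into one kernel-verified Lean document; each statement's English description precedes it below -/
import Mathlib

section
/- Let s ∈ R be a condition and let ⟨(pₙ,qₙ) : n ∈ ℕ⟩ be such that for every n: pₙ ∈ Aₛ, (pₙ,qₙ) ∈ Bₛ, pₙ₊₁ <ₛ pₙ, and qₙ ⊆ qₙ₊₁. Then there exist a condition r ∈ R with r ≤_R s, an element p ∈ Aᵣ, and a function q ∈ Col(Aᵣ) such that (p,q) ∈ Bᵣ, p <ᵣ pₙ for every n, and q ⊇ qₙ for every n. -/
open Cardinal Set

noncomputable section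

/-- A partial function from ordinals to ordinals, represented by its graph. -/
abbrev ColFun := Set (Ordinal × Ordinal)

/-- `q ∈ Col(X)`: `q` is (the graph of) a function whose domain is an ordinal `< ω₁`
and whose range is a subset of `X`. -/
def IsColFun (X : Set Ordinal) (q : ColFun) : Prop :=
  (∀ a b b', (a, b) ∈ q → (a, b') ∈ q → b = b') ∧
  (∃ δ : Ordinal, δ < (aleph 1).ord ∧ ∀ a : Ordinal, (∃ b, (a, b) ∈ q) ↔ a < δ) ∧
  (∀ a b, (a, b) ∈ q → b ∈ X)

/-- A quadruple `((A, <), B, C, F)`; `F` is a partial function represented by its graph. -/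
structure Quad where
  A : Set Ordinal
  lt : Ordinal → Ordinal → Prop
  B : Set (Ordinal × ColFun)
  C : Set (ℕ → Ordinal)
  F : Set ((ℕ → Ordinal) × (Ordinal × ColFun) × ℕ)

namespace Quad

/-- `x ≤ᵣ y`. -/
def leR (r : Quad) (x y : Ordinal) : Prop := r.lt x y ∨ x = y

/-- `x ⊥ᵣ y`: no `z ∈ Aᵣ` with `z ≤ᵣ x` and `z ≤ᵣ y`. -/
def Incomp (r : Quad) (x y : Ordinal) : Prop := ¬ ∃ z ∈ r.A, r.leR z x ∧ r.leR z y

/-- `r` is a forcing condition. -/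
def IsCond (r : Quad) : Prop :=
  -- (1) A is a countable set of ordinals < ω₂
  r.A.Countable ∧
  (∀ a ∈ r.A, a < (aleph 2).ord) ∧
  -- (2) <ᵣ is a strict partial order on A
  (∀ a b, r.lt a b → a ∈ r.A ∧ b ∈ r.A) ∧
  (∀ a b c, r.lt a b → r.lt b c → r.lt a c) ∧
  -- (3) b <ᵣ a implies a < b (whence <ᵣ is irreflexive and asymmetric)
  (∀ a b, r.lt b a → a < b) ∧
  -- (4) B is a countable subset of A × Col(A) with p ∈ range q for (p,q) ∈ B
  r.B.Countable ∧
  (∀ pq ∈ r.B, pq.1 ∈ r.A ∧ IsColFun r.A pq.2 ∧ ∃ α, (α, pq.1) ∈ pq.2) ∧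
  -- (5) C is a countable set of <ᵣ-descending sequences in A without lower bound
  r.C.Countable ∧
  (∀ a ∈ r.C, (∀ n, a n ∈ r.A) ∧ (∀ n, r.lt (a (n + 1)) (a n)) ∧
    ¬ ∃ z ∈ r.A, ∀ n, r.leR z (a n)) ∧
  -- (6) F is a (partial) function whose domain consists exactly of the pairs
  -- (⟨aₙ⟩, (p,q)) with ⟨aₙ⟩ ∈ C, (p,q) ∈ B, p ≥ a₀, satisfying (*)
  (∀ x ∈ r.F, x.1 ∈ r.C ∧ x.2.1 ∈ r.B ∧ x.1 0 ≤ x.2.1.1) ∧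
  (∀ a pq, a ∈ r.C → pq ∈ r.B → a 0 ≤ pq.1 → ∃! m : ℕ, (a, pq, m) ∈ r.F) ∧
  (∀ a pq m, (a, pq, m) ∈ r.F →
    ∀ p'q' ∈ r.B, r.leR p'q'.1 pq.1 → pq.2 ⊆ p'q'.2 →
      r.lt p'q'.1 (a m) → ∃ k, r.Incomp p'q'.1 (a k))

/-- `Ext r s`: `r ≤_R s`, i.e. `r` is stronger than `s`. -/
def Ext (r s : Quad) : Prop :=
  s.A ⊆ r.A ∧
  (∀ a ∈ s.A, ∀ b ∈ s.A, (r.lt a b ↔ s.lt a b)) ∧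
  (∀ a ∈ s.A, ∀ b ∈ s.A, (r.Incomp a b ↔ s.Incomp a b)) ∧
  s.B ⊆ r.B ∧ s.C ⊆ r.C ∧ s.F ⊆ r.F

end Quad

/-!
The stronger condition adds one ordinal `x` above all of `Aₛ` (possible because `Aₛ` is countable
and `ω₂` is regular), puts `x` below exactly the elements lying above some `pₙ`, and adds `(x, q)`
to `B`, where `q` extends `⋃ qₙ` by the value `x` at the first point outside its domain. The new
values `F(⟨aₙ⟩, (x, q))` come from property (6) of `s` itself: for each `⟨aₙ⟩ ∈ Cₛ` some `a_N` lies
above no `pₘ`, so `x ⊥ a_N`, and setting `F(⟨aₙ⟩, (x, q)) = N` makes (6) hold for the new pairs,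
as no element other than `x` itself lies below `x`.
-/

open Ordinal in
theorem exists_lt_ord_of_countable {κ : Cardinal.{u}} (hκ : κ.IsRegular) (hκ₀ : ℵ₀ < κ)
    {A : Set Ordinal.{u}} (hA : A.Countable) (hAκ : ∀ a ∈ A, a < κ.ord) :
    ∃ x < κ.ord, ∀ a ∈ A, a < x := by
  have hcard : #A < (Ordinal.lift.{u + 1} κ.ord).cof := by
    rw [← lift_cof, hκ.cof_ord]
    exact (le_aleph0_iff_set_countable.2 hA).trans_lt (by simpa using hκ₀)
  refine ⟨sSup A + 1, (isSuccLimit_ord hκ₀.le).add_one_lt (sSup_lt_of_lt_cof hcard hAκ),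
    fun a ha => Order.lt_add_one_iff.2 (le_csSup ⟨κ.ord, fun b hb => (hAκ b hb).le⟩ ha)⟩

theorem IsColFun.mono {X Y : Set Ordinal} {q : ColFun} (hq : IsColFun X q) (hXY : X ⊆ Y) :
    IsColFun Y q :=
  ⟨hq.1, hq.2.1, fun a b hab => hXY (hq.2.2 a b hab)⟩

theorem isColFun_iUnion {X : Set Ordinal} {q : ℕ → ColFun} (hmono : Monotone q)
    (hq : ∀ n, IsColFun X (q n)) : IsColFun X (⋃ n, q n) := by
  choose δ hδω hδ using fun n => (hq n).2.1
  refine ⟨?_, ⟨⨆ n, δ n, ?_, fun a => ?_⟩, ?_⟩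
  · simp only [mem_iUnion]
    rintro a b b' ⟨m, hm⟩ ⟨n, hn⟩
    exact (hq (max m n)).1 a b b' (hmono (le_max_left m n) hm) (hmono (le_max_right m n) hn)
  · refine Ordinal.lift_iSup_lt_of_lt_cof ?_ hδω
    rw [← Ordinal.lift_cof, isRegular_aleph_one.cof_ord]
    simp
  · simp only [mem_iUnion, Ordinal.lt_iSup_iff, ← hδ]
    exact exists_comm
  · simp only [mem_iUnion]
    rintro a b ⟨n, hn⟩
    exact (hq n).2.2 a b hn

theorem IsColFun.exists_extend {X : Set Ordinal} {q : ColFun} (hq : IsColFun X q)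
    (x : Ordinal) : ∃ q', IsColFun (insert x X) q' ∧ q ⊆ q' ∧ ∃ α, (α, x) ∈ q' := by
  obtain ⟨hfun, ⟨δ, hδω, hδ⟩, hran⟩ := hq
  have hδq : ∀ b, (δ, b) ∉ q := fun b h => ((hδ δ).1 ⟨b, h⟩).false
  refine ⟨insert (δ, x) q, ⟨?_, ⟨δ + 1, (isSuccLimit_ord (aleph0_le_aleph 1)).add_one_lt hδω,
    fun a => ?_⟩, ?_⟩, subset_insert _ _, δ, mem_insert _ _⟩
  · simp only [mem_insert_iff, Prod.mk.injEq]
    rintro a b b' (⟨rfl, rfl⟩ | hb) hb'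
    · rcases hb' with ⟨-, rfl⟩ | hb'
      exacts [rfl, (hδq _ hb').elim]
    · rcases hb' with ⟨rfl, -⟩ | hb'
      exacts [(hδq _ hb).elim, hfun a b b' hb hb']
  · simp only [mem_insert_iff, Prod.mk.injEq, Order.lt_add_one_iff, le_iff_lt_or_eq]
    constructor
    · rintro ⟨b, ⟨rfl, -⟩ | hb⟩
      exacts [Or.inr rfl, Or.inl ((hδ a).1 ⟨b, hb⟩)]
    · rintro (h | rfl)
      · obtain ⟨b, hb⟩ := (hδ a).2 h
        exact ⟨b, Or.inr hb⟩
      · exact ⟨x, Or.inl ⟨rfl, rfl⟩⟩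
  · simp only [mem_insert_iff, Prod.mk.injEq]
    rintro a b (⟨-, rfl⟩ | hb)
    · exact Or.inl rfl
    · exact Or.inr (hran a b hb)

namespace Quad

section Conditions

variable {s : Quad} {a b c : Ordinal}

theorem IsCond.mem_A_of_lt (hs : s.IsCond) (h : s.lt a b) : a ∈ s.A ∧ b ∈ s.A :=
  hs.2.2.1 a b h

theorem IsCond.lt_trans (hs : s.IsCond) (hab : s.lt a b) (hbc : s.lt b c) : s.lt a c :=
  hs.2.2.2.1 a b c hab hbc

theorem IsCond.le_of_leR (hs : s.IsCond) (h : s.leR a b) : b ≤ a :=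
  h.elim (fun h => (hs.2.2.2.2.1 b a h).le) fun h => h.ge

theorem IsCond.mem_B (hs : s.IsCond) {pq : Ordinal × ColFun} (h : pq ∈ s.B) :
    pq.1 ∈ s.A ∧ IsColFun s.A pq.2 ∧ ∃ α, (α, pq.1) ∈ pq.2 :=
  hs.2.2.2.2.2.2.1 pq h

theorem IsCond.mem_C {d : ℕ → Ordinal} (hs : s.IsCond) (h : d ∈ s.C) :
    (∀ n, d n ∈ s.A) ∧ (∀ n, s.lt (d (n + 1)) (d n)) ∧ ¬ ∃ z ∈ s.A, ∀ n, s.leR z (d n) :=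
  hs.2.2.2.2.2.2.2.2.1 d h

theorem IsCond.mem_F (hs : s.IsCond) {y : (ℕ → Ordinal) × (Ordinal × ColFun) × ℕ}
    (h : y ∈ s.F) : y.1 ∈ s.C ∧ y.2.1 ∈ s.B ∧ y.1 0 ≤ y.2.1.1 :=
  hs.2.2.2.2.2.2.2.2.2.1 y h

theorem IsCond.existsUnique_F (hs : s.IsCond) {d : ℕ → Ordinal} {pq : Ordinal × ColFun}
    (hd : d ∈ s.C) (hpq : pq ∈ s.B) (h : d 0 ≤ pq.1) : ∃! m, (d, pq, m) ∈ s.F :=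
  hs.2.2.2.2.2.2.2.2.2.2.1 d pq hd hpq h

theorem IsCond.exists_incomp_of_mem_F (hs : s.IsCond) {d : ℕ → Ordinal}
    {pq p'q' : Ordinal × ColFun} {m : ℕ} (hF : (d, pq, m) ∈ s.F) (hp'q' : p'q' ∈ s.B)
    (hle : s.leR p'q'.1 pq.1) (hsub : pq.2 ⊆ p'q'.2) (hlt : s.lt p'q'.1 (d m)) :
    ∃ k, s.Incomp p'q'.1 (d k) :=
  hs.2.2.2.2.2.2.2.2.2.2.2 d pq m hF p'q' hp'q' hle hsub hlt

theorem IsCond.mem_A_of_leR (hs : s.IsCond) (ha : a ∈ s.A) (h : s.leR a b) : b ∈ s.A :=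
  h.elim (fun h => (hs.mem_A_of_lt h).2) fun h => h ▸ ha

theorem IsCond.lt_of_lt_of_leR (hs : s.IsCond) (hab : s.lt a b) (hbc : s.leR b c) : s.lt a c :=
  hbc.elim (hs.lt_trans hab) fun h => h ▸ hab

theorem IsCond.lt_of_leR_of_lt (hs : s.IsCond) (hab : s.leR a b) (hbc : s.lt b c) : s.lt a c :=
  hab.elim (fun h => hs.lt_trans h hbc) fun h => h ▸ hbc

theorem IsCond.leR_trans (hs : s.IsCond) (hab : s.leR a b) (hbc : s.leR b c) : s.leR a c :=
  hab.elim (fun h => Or.inl (hs.lt_of_lt_of_leR h hbc)) fun h => h ▸ hbc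

theorem IsCond.chain_leR_of_le (hs : s.IsCond) {p : ℕ → Ordinal}
    (hdec : ∀ n, s.lt (p (n + 1)) (p n)) {m n : ℕ} (hmn : m ≤ n) : s.leR (p n) (p m) := by
  induction n, hmn using Nat.le_induction with
  | base => exact Or.inr rfl
  | succ n _ ih => exact Or.inl (hs.lt_of_lt_of_leR (hdec n) ih)

theorem IsCond.chain_lt_of_lt (hs : s.IsCond) {p : ℕ → Ordinal}
    (hdec : ∀ n, s.lt (p (n + 1)) (p n)) {m n : ℕ} (hmn : m < n) : s.lt (p n) (p m) :=
  hs.lt_of_leR_of_lt (hs.chain_leR_of_le hdec hmn) (hdec m)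

/-- If every `d n` lay above some `p (m n)`, property (6) for `M = F(d, (p (m 0), q (m 0)))` would
make a later term of the chain incompatible with some `d k`, although the chain has terms below
both. -/
theorem IsCond.exists_forall_not_leR_chain (hs : s.IsCond) {p : ℕ → Ordinal} {q : ℕ → ColFun}
    (hpA : ∀ n, p n ∈ s.A) (hB : ∀ n, (p n, q n) ∈ s.B) (hdec : ∀ n, s.lt (p (n + 1)) (p n))
    (hq : ∀ n, q n ⊆ q (n + 1)) {d : ℕ → Ordinal} (hd : d ∈ s.C) :
    ∃ n, ∀ m, ¬ s.leR (p m) (d n) := by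
  by_contra! habove
  choose m hm using habove
  obtain ⟨M, hM, -⟩ := hs.existsUnique_F hd (hB (m 0)) (hs.le_of_leR (hm 0))
  set j := max (m 0) (m M) + 1
  obtain ⟨k, hk⟩ := hs.exists_incomp_of_mem_F hM (hB j)
    (hs.chain_leR_of_le hdec (by omega)) (monotone_nat_of_le_succ hq (by omega))
    (hs.lt_of_lt_of_leR (hs.chain_lt_of_lt hdec (by omega)) (hm M))
  exact hk ⟨p (max j (m k)), hpA _, hs.chain_leR_of_le hdec (le_max_left _ _),
    hs.leR_trans (hs.chain_leR_of_le hdec (le_max_right _ _)) (hm k)⟩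

end Conditions

def adjoinBelow (s : Quad) (p : ℕ → Ordinal) (x : Ordinal) (qx : ColFun)
    (N : (ℕ → Ordinal) → ℕ) : Quad where
  A := insert x s.A
  lt a b := s.lt a b ∨ a = x ∧ ∃ n, s.leR (p n) b
  B := insert (x, qx) s.B
  C := s.C
  F := s.F ∪ (fun d => (d, (x, qx), N d)) '' s.C

section AdjoinBelow

variable {s : Quad} {p : ℕ → Ordinal} {x : Ordinal} {qx : ColFun} {N : (ℕ → Ordinal) → ℕ}
  {a b z : Ordinal}

theorem adjoinBelow_lt_iff_of_mem (hxA : x ∉ s.A) (ha : a ∈ s.A) :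
    (adjoinBelow s p x qx N).lt a b ↔ s.lt a b :=
  or_iff_left fun h => hxA (h.1 ▸ ha)

theorem adjoinBelow_leR_iff_of_mem (hxA : x ∉ s.A) (ha : a ∈ s.A) :
    (adjoinBelow s p x qx N).leR a b ↔ s.leR a b :=
  or_congr_left (adjoinBelow_lt_iff_of_mem hxA ha)

theorem eq_of_adjoinBelow_leR (hs : s.IsCond) (hxA : x ∉ s.A)
    (h : (adjoinBelow s p x qx N).leR z x) : z = x := by
  rcases h with (h | ⟨rfl, -⟩) | rfl
  · exact absurd (hs.mem_A_of_lt h).2 hxA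
  all_goals rfl

theorem exists_leR_of_adjoinBelow_leR (hs : s.IsCond) (hxA : x ∉ s.A) (ha : a ∈ s.A)
    (h : (adjoinBelow s p x qx N).leR x a) : ∃ n, s.leR (p n) a := by
  rcases h with (h | ⟨-, h⟩) | rfl
  · exact absurd (hs.mem_A_of_lt h).1 hxA
  · exact h
  · exact absurd ha hxA

theorem adjoinBelow_incomp_iff (hs : s.IsCond) (hxA : x ∉ s.A) (hpA : ∀ n, p n ∈ s.A)
    (hdec : ∀ n, s.lt (p (n + 1)) (p n)) (ha : a ∈ s.A) (hb : b ∈ s.A) :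
    (adjoinBelow s p x qx N).Incomp a b ↔ s.Incomp a b := by
  refine not_congr ⟨?_, fun ⟨z, hz, hza, hzb⟩ => ⟨z, Or.inr hz,
    (adjoinBelow_leR_iff_of_mem hxA hz).2 hza, (adjoinBelow_leR_iff_of_mem hxA hz).2 hzb⟩⟩
  rintro ⟨z, rfl | hz, hza, hzb⟩
  · obtain ⟨m, hm⟩ := exists_leR_of_adjoinBelow_leR hs hxA ha hza
    obtain ⟨n, hn⟩ := exists_leR_of_adjoinBelow_leR hs hxA hb hzb
    exact ⟨p (max m n), hpA _, hs.leR_trans (hs.chain_leR_of_le hdec (le_max_left m n)) hm,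
      hs.leR_trans (hs.chain_leR_of_le hdec (le_max_right m n)) hn⟩
  · exact ⟨z, hz, (adjoinBelow_leR_iff_of_mem hxA hz).1 hza,
      (adjoinBelow_leR_iff_of_mem hxA hz).1 hzb⟩

theorem adjoinBelow_ext (hs : s.IsCond) (hxA : x ∉ s.A) (hpA : ∀ n, p n ∈ s.A)
    (hdec : ∀ n, s.lt (p (n + 1)) (p n)) : Ext (adjoinBelow s p x qx N) s :=
  ⟨subset_insert _ _, fun _ ha _ _ => adjoinBelow_lt_iff_of_mem hxA ha,
    fun _ ha _ hb => adjoinBelow_incomp_iff hs hxA hpA hdec ha hb,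
    subset_insert _ _, subset_rfl, subset_union_left⟩

theorem not_adjoinBelow_leR_of_mem_C (hs : s.IsCond) (hxA : x ∉ s.A)
    (hN : ∀ d ∈ s.C, ∀ m, ¬ s.leR (p m) (d (N d))) {d : ℕ → Ordinal} (hd : d ∈ s.C) :
    ¬ (adjoinBelow s p x qx N).leR x (d (N d)) := fun h =>
  have ⟨m, hm⟩ := exists_leR_of_adjoinBelow_leR hs hxA ((hs.mem_C hd).1 _) h
  hN d hd m hm

theorem adjoinBelow_mem_C (hs : s.IsCond) (hxA : x ∉ s.A)
    (hN : ∀ d ∈ s.C, ∀ m, ¬ s.leR (p m) (d (N d))) {d : ℕ → Ordinal} (hd : d ∈ s.C) :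
    (∀ n, d n ∈ insert x s.A) ∧ (∀ n, (adjoinBelow s p x qx N).lt (d (n + 1)) (d n)) ∧
      ¬ ∃ z ∈ insert x s.A, ∀ n, (adjoinBelow s p x qx N).leR z (d n) := by
  obtain ⟨hdA, hdec, hunbdd⟩ := hs.mem_C hd
  refine ⟨fun n => Or.inr (hdA n), fun n => Or.inl (hdec n), ?_⟩
  rintro ⟨z, rfl | hz, hzd⟩
  · exact not_adjoinBelow_leR_of_mem_C hs hxA hN hd (hzd _)
  · exact hunbdd ⟨z, hz, fun n => (adjoinBelow_leR_iff_of_mem hxA hz).1 (hzd n)⟩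

theorem adjoinBelow_existsUnique_F (hs : s.IsCond) (hxA : x ∉ s.A) {d : ℕ → Ordinal}
    {pq : Ordinal × ColFun} (hd : d ∈ s.C) (hpq : pq ∈ insert (x, qx) s.B) (h0 : d 0 ≤ pq.1) :
    ∃! m, (d, pq, m) ∈ (adjoinBelow s p x qx N).F := by
  rcases hpq with rfl | hpq
  · refine ⟨N d, Or.inr ⟨d, hd, rfl⟩, ?_⟩
    rintro m (hm | ⟨d', -, hm⟩)
    · exact absurd (hs.mem_B (hs.mem_F hm).2.1).1 hxA
    · simp only [Prod.mk.injEq] at hm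
      obtain ⟨rfl, -, rfl⟩ := hm
      rfl
  · obtain ⟨m, hm, huniq⟩ := hs.existsUnique_F hd hpq h0
    refine ⟨m, Or.inl hm, ?_⟩
    rintro m' (hm' | ⟨d', -, hm'⟩)
    · exact huniq m' hm'
    · simp only [Prod.mk.injEq] at hm'
      obtain ⟨rfl, rfl, rfl⟩ := hm'
      exact absurd (hs.mem_B hpq).1 hxA

theorem adjoinBelow_exists_incomp_of_mem_F (hs : s.IsCond) (hxA : x ∉ s.A)
    (hpA : ∀ n, p n ∈ s.A) (hdec : ∀ n, s.lt (p (n + 1)) (p n))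
    (hN : ∀ d ∈ s.C, ∀ m, ¬ s.leR (p m) (d (N d))) {d : ℕ → Ordinal}
    {pq p'q' : Ordinal × ColFun} {m : ℕ} (hF : (d, pq, m) ∈ (adjoinBelow s p x qx N).F)
    (hp'q' : p'q' ∈ insert (x, qx) s.B) (hle : (adjoinBelow s p x qx N).leR p'q'.1 pq.1)
    (hsub : pq.2 ⊆ p'q'.2) (hlt : (adjoinBelow s p x qx N).lt p'q'.1 (d m)) :
    ∃ k, (adjoinBelow s p x qx N).Incomp p'q'.1 (d k) := by
  rcases hF with hF | ⟨d, hd, hF⟩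
  · obtain ⟨hd, hpq, -⟩ := hs.mem_F hF
    rcases hp'q' with rfl | hp'q'
    · exact ⟨N d, fun ⟨z, _, hzx, hzd⟩ =>
        not_adjoinBelow_leR_of_mem_C hs hxA hN hd (eq_of_adjoinBelow_leR hs hxA hzx ▸ hzd)⟩
    · have hp' := (hs.mem_B hp'q').1
      obtain ⟨k, hk⟩ := hs.exists_incomp_of_mem_F hF hp'q'
        ((adjoinBelow_leR_iff_of_mem hxA hp').1 hle) hsub
        ((adjoinBelow_lt_iff_of_mem hxA hp').1 hlt)
      exact ⟨k, (adjoinBelow_incomp_iff hs hxA hpA hdec hp' ((hs.mem_C hd).1 k)).2 hk⟩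
  · simp only [Prod.mk.injEq] at hF
    obtain ⟨rfl, rfl, rfl⟩ := hF
    rw [eq_of_adjoinBelow_leR hs hxA hle] at hlt
    exact absurd (Or.inl hlt) (not_adjoinBelow_leR_of_mem_C hs hxA hN hd)

theorem adjoinBelow_isCond (hs : s.IsCond) (hx : ∀ a ∈ s.A, a < x)
    (hxω : x < (aleph 2).ord) (hpA : ∀ n, p n ∈ s.A) (hdec : ∀ n, s.lt (p (n + 1)) (p n))
    (hqx : IsColFun (insert x s.A) qx) (hxqx : ∃ α, (α, x) ∈ qx)
    (hN : ∀ d ∈ s.C, ∀ m, ¬ s.leR (p m) (d (N d))) : (adjoinBelow s p x qx N).IsCond := by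
  have hxA : x ∉ s.A := fun h => (hx x h).false
  have ⟨hAc, hAω, _, _, hord, hBc, _, hCc, _⟩ := hs
  refine ⟨hAc.insert x, ?_, ?_, ?_, ?_, hBc.insert _, ?_, hCc,
    fun d hd => adjoinBelow_mem_C hs hxA hN hd, ?_,
    fun d pq hd hpq h0 => adjoinBelow_existsUnique_F hs hxA hd hpq h0,
    fun d pq m hF p'q' hp'q' => adjoinBelow_exists_incomp_of_mem_F hs hxA hpA hdec hN hF hp'q'⟩
  · rintro a (rfl | ha)
    exacts [hxω, hAω a ha]
  · rintro a b (h | ⟨rfl, n, hn⟩)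
    · exact ⟨Or.inr (hs.mem_A_of_lt h).1, Or.inr (hs.mem_A_of_lt h).2⟩
    · exact ⟨Or.inl rfl, Or.inr (hs.mem_A_of_leR (hpA n) hn)⟩
  · rintro a b c (hab | ⟨rfl, n, hn⟩) (hbc | ⟨rfl, -⟩)
    · exact Or.inl (hs.lt_trans hab hbc)
    · exact absurd (hs.mem_A_of_lt hab).2 hxA
    · exact Or.inr ⟨rfl, n, Or.inl (hs.lt_of_leR_of_lt hn hbc)⟩
    · exact absurd (hs.mem_A_of_leR (hpA n) hn) hxA
  · rintro a b (h | ⟨rfl, n, hn⟩)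
    exacts [hord a b h, hx a (hs.mem_A_of_leR (hpA n) hn)]
  · rintro pq (rfl | hpq)
    · exact ⟨mem_insert _ _, hqx, hxqx⟩
    · obtain ⟨hpA', hq, hran⟩ := hs.mem_B hpq
      exact ⟨Or.inr hpA', hq.mono (subset_insert _ _), hran⟩
  · rintro y (hy | ⟨d, hd, rfl⟩)
    · obtain ⟨hd, hpq, h0⟩ := hs.mem_F hy
      exact ⟨hd, Or.inr hpq, h0⟩
    · exact ⟨hd, mem_insert _ _, (hx _ ((hs.mem_C hd).1 0)).le⟩

end AdjoinBelow

end Quad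

open Quad in
/-- Any descending ω-chain `⟨(pₙ,qₙ)⟩` in `Bₛ` gets a lower bound `(p,q) ∈ Bᵣ` in some
stronger condition `r`. -/
theorem stmt4 (s : Quad) (hs : s.IsCond) (p : ℕ → Ordinal) (q : ℕ → ColFun)
    (hpA : ∀ n, p n ∈ s.A) (hB : ∀ n, (p n, q n) ∈ s.B)
    (hdec : ∀ n, s.lt (p (n + 1)) (p n)) (hq : ∀ n, q n ⊆ q (n + 1)) :
    ∃ r : Quad, r.IsCond ∧ Ext r s ∧ ∃ pp ∈ r.A, ∃ qq : ColFun,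
      IsColFun r.A qq ∧ (pp, qq) ∈ r.B ∧ (∀ n, r.lt pp (p n)) ∧ (∀ n, q n ⊆ qq) := by
  choose! N hN using fun d (hd : d ∈ s.C) => hs.exists_forall_not_leR_chain hpA hB hdec hq hd
  have hℵ₂ : (aleph 2).IsRegular := by
    simpa [one_add_one_eq_two] using isRegular_aleph_add_one 1
  obtain ⟨x, hxω, hx⟩ := exists_lt_ord_of_countable hℵ₂ (aleph0_lt_aleph.2 two_pos) hs.1 hs.2.1
  obtain ⟨qx, hqx, hsub, hxqx⟩ := (isColFun_iUnion (monotone_nat_of_le_succ hq)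
    fun n => (hs.mem_B (hB n)).2.1).exists_extend x
  exact ⟨adjoinBelow s p x qx N, adjoinBelow_isCond hs hx hxω hpA hdec hqx hxqx hN,
    adjoinBelow_ext hs (fun h => (hx x h).false) hpA hdec, x, mem_insert _ _, qx, hqx,
    mem_insert _ _, fun n => Or.inr ⟨rfl, n, Or.inr rfl⟩, fun n => (subset_iUnion q n).trans hsub⟩
end
end

section
/- In the amalgamation setting: let m < n, y ∈ Aₘ ∖ D, and x ∈ Aₙ ∖ D. If x <_t y then x ≤ₙ aⁿₙ and bᵐₘ ≤ₘ y. Moreover, if x and y are compatible in <_t then bᵐₘ ≤ₘ y. -/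
open Cardinal Set

noncomputable section

open Quad

/-- Push a `Col`-function forward along a map of ordinals (acting on the range). -/
def mapCol (f : Ordinal → Ordinal) (q : ColFun) : ColFun :=
  {x | ∃ a b, (a, b) ∈ q ∧ x = (a, f b)}

/-- The amalgamation setting: a sequence of conditions forming a Δ-system with root `D`,
a commutative system of isomorphisms `π`, and descending chains `cⁿ` matched by `π`. -/
structure Amalg where
  r : ℕ → Quad
  cond : ∀ n, (r n).IsCond
  D : Set Ordinal
  inter : ∀ m n : ℕ, m < n → (r m).A ∩ (r n).A = D
  supD_lt : ∀ m : ℕ, ∀ x ∈ (r m).A \ D, sSup D < x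
  supA_lt : ∀ m n : ℕ, m < n → ∀ x ∈ (r n).A \ D, sSup (r m).A < x
  lt_agree : ∀ m n : ℕ, ∀ a ∈ D, ∀ b ∈ D, ((r m).lt a b ↔ (r n).lt a b)
  incomp_agree : ∀ m n : ℕ, ∀ a ∈ D, ∀ b ∈ D, ((r m).Incomp a b ↔ (r n).Incomp a b)
  B_agree : ∀ m n : ℕ, ∀ pq : Ordinal × ColFun, pq.1 ∈ D → IsColFun D pq.2 →
    (pq ∈ (r m).B ↔ pq ∈ (r n).B)
  C_agree : ∀ m n : ℕ, ∀ a : ℕ → Ordinal, (∀ k, a k ∈ D) → (a ∈ (r m).C ↔ a ∈ (r n).C)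
  pi : ℕ → ℕ → Ordinal → Ordinal
  pi_mem : ∀ m n : ℕ, ∀ x ∈ (r m).A, pi m n x ∈ (r n).A
  pi_id : ∀ m : ℕ, ∀ x ∈ (r m).A, pi m m x = x
  pi_inv : ∀ m n : ℕ, ∀ x ∈ (r m).A, pi n m (pi m n x) = x
  pi_comm : ∀ m n k : ℕ, ∀ x ∈ (r m).A, pi n k (pi m n x) = pi m k x
  pi_idD : ∀ m n : ℕ, ∀ x ∈ D, pi m n x = x
  pi_iso : ∀ m n : ℕ, ∀ x ∈ (r m).A, ∀ y ∈ (r m).A,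
    ((r m).lt x y ↔ (r n).lt (pi m n x) (pi m n y))
  pi_B : ∀ m n : ℕ, ∀ pq ∈ (r m).B, (pi m n pq.1, mapCol (pi m n) pq.2) ∈ (r n).B
  pi_C : ∀ m n : ℕ, ∀ a ∈ (r m).C, (fun k => pi m n (a k)) ∈ (r n).C
  pi_F : ∀ m n : ℕ, ∀ x ∈ (r m).F,
    ((fun k => pi m n (x.1 k)), (pi m n x.2.1.1, mapCol (pi m n) x.2.1.2), x.2.2) ∈ (r n).F
  c : ℕ → ℕ → Ordinal
  c_mem : ∀ n k : ℕ, c n k ∈ (r n).A \ D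
  c_dec : ∀ n k : ℕ, (r n).lt (c n (k + 1)) (c n k)
  pi_c : ∀ m n k : ℕ, pi m n (c m k) = c n k

namespace Amalg

/-- `A_t = ⋃ₙ Aₙ`. -/
def At (S : Amalg) : Set Ordinal := ⋃ n, (S.r n).A

/-- `<_t`: the transitive closure of the union of the `<ₙ` together with the pairs
`aⁿ⁺¹ₙ₊₁ <_t bⁿₙ` (recall `aⁿₖ = cⁿ₂ₖ` and `bⁿₖ = cⁿ₂ₖ₊₁`). -/
def ltT (S : Amalg) : Ordinal → Ordinal → Prop :=
  Relation.TransGen (fun x y =>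
    (∃ n, (S.r n).lt x y) ∨ ∃ n : ℕ, x = S.c (n + 1) (2 * (n + 1)) ∧ y = S.c n (2 * n + 1))

/-- `x ≤_t y`. -/
def leT (S : Amalg) (x y : Ordinal) : Prop := S.ltT x y ∨ x = y

/-- `x` and `y` are compatible in `<_t`. -/
def CompatT (S : Amalg) (x y : Ordinal) : Prop := ∃ z ∈ S.At, S.leT z x ∧ S.leT z y

end Amalg

/-!
A step of `<_t` from `z` to `w` inside some `Aₙ` lowers the ordinal (`w < z`), and `D` lies
below every other element, so `<_t` never leads out of `D`. Off `D` every element lies in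
exactly one `Aₙ`, and the only steps changing the index are the new pairs `aⁿ⁺¹ₙ₊₁ < bⁿₙ`,
which lower it by one. Hence a `≤_t`-path from `Aₖ ∖ D` to `Aⱼ ∖ D` either stays in `Aₖ`
(so `j = k` and it is a `≤ₖ`-chain) or leaves `Aₖ` at `aᵏₖ` and enters `Aⱼ` at `bʲⱼ` with `j < k`.
A common `≤_t`-lower bound of `x ∈ Aₙ` and `y ∈ Aₘ`, `m < n`, lies in some `Aₖ` with `k ≥ n > m`,
so its path to `y` is of the second kind.
-/

namespace Quad

variable {r : Quad} {a b c : Ordinal}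

theorem IsCond.mem_of_lt (hr : r.IsCond) (h : r.lt a b) : a ∈ r.A ∧ b ∈ r.A :=
  hr.2.2.1 a b h

theorem IsCond.gt_of_lt (hr : r.IsCond) (h : r.lt a b) : b < a :=
  hr.2.2.2.2.1 b a h

theorem IsCond.leR_of_leR_of_lt (hr : r.IsCond) (hab : r.leR a b) (hbc : r.lt b c) :
    r.leR a c := by
  rcases hab with hab | rfl
  · exact Or.inl (hr.2.2.2.1 a b c hab hbc)
  · exact Or.inl hbc

end Quad

namespace Amalg

variable (S : Amalg)

def StepT (x y : Ordinal) : Prop :=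
  (∃ n, (S.r n).lt x y) ∨ ∃ n : ℕ, x = S.c (n + 1) (2 * (n + 1)) ∧ y = S.c n (2 * n + 1)

theorem leT_iff_reflTransGen {x y : Ordinal} :
    S.leT x y ↔ Relation.ReflTransGen S.StepT x y := by
  rw [Relation.reflTransGen_iff_eq_or_transGen, leT, ltT, eq_comm, or_comm]
  rfl

theorem D_subset_A (m : ℕ) : S.D ⊆ (S.r m).A := by
  rw [← S.inter m (m + 1) m.lt_succ_self]
  exact inter_subset_left

theorem bddAbove_D : BddAbove S.D :=
  ⟨(aleph 2).ord, fun _ hd => ((S.cond 0).2.1 _ (S.D_subset_A 0 hd)).le⟩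

theorem index_eq {i j : ℕ} {w : Ordinal} (hi : w ∈ (S.r i).A \ S.D) (hj : w ∈ (S.r j).A) :
    i = j := by
  by_contra hij
  rcases lt_or_gt_of_ne hij with h | h
  · exact hi.2 (S.inter i j h ▸ ⟨hi.1, hj⟩)
  · exact hi.2 (S.inter j i h ▸ ⟨hj, hi.1⟩)

theorem mem_D_of_stepT {z w : Ordinal} (hz : z ∈ S.D) (h : S.StepT z w) : w ∈ S.D := by
  rcases h with ⟨j, hlt⟩ | ⟨j, rfl, -⟩
  · by_contra hw
    have hw_gt : sSup S.D < w := S.supD_lt j w ⟨((S.cond j).mem_of_lt hlt).2, hw⟩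
    exact ((S.cond j).gt_of_lt hlt).not_ge ((le_csSup S.bddAbove_D hz).trans hw_gt.le)
  · exact absurd hz (S.c_mem _ _).2

theorem mem_D_of_leT {z w : Ordinal} (hz : z ∈ S.D) (h : S.leT z w) : w ∈ S.D := by
  rw [leT_iff_reflTransGen] at h
  induction h with
  | refl => exact hz
  | tail _ hstep ih => exact S.mem_D_of_stepT ih hstep

def PathShape (k : ℕ) (z : Ordinal) (j : ℕ) (w : Ordinal) : Prop :=
  (j = k ∧ (S.r k).leR z w) ∨
    (j < k ∧ (S.r k).leR z (S.c k (2 * k)) ∧ (S.r j).leR (S.c j (2 * j + 1)) w)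

variable {S}

theorem PathShape.index_le {k j : ℕ} {z w : Ordinal} (h : S.PathShape k z j w) : j ≤ k := by
  rcases h with ⟨rfl, -⟩ | ⟨h, -⟩ <;> omega

theorem PathShape.stepT {k j : ℕ} {z w v : Ordinal} (h : S.PathShape k z j w)
    (hw : w ∈ (S.r j).A \ S.D) (hstep : S.StepT w v) :
    ∃ i, v ∈ (S.r i).A ∧ S.PathShape k z i v := by
  rcases hstep with ⟨i, hlt⟩ | ⟨i, rfl, rfl⟩
  · have hmem := (S.cond i).mem_of_lt hlt
    obtain rfl := S.index_eq hw hmem.1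
    refine ⟨j, hmem.2, ?_⟩
    rcases h with ⟨rfl, hzw⟩ | ⟨hjk, hza, hbw⟩
    · exact Or.inl ⟨rfl, (S.cond j).leR_of_leR_of_lt hzw hlt⟩
    · exact Or.inr ⟨hjk, hza, (S.cond j).leR_of_leR_of_lt hbw hlt⟩
  · obtain rfl := S.index_eq hw (S.c_mem _ _).1
    refine ⟨i, (S.c_mem _ _).1, Or.inr ?_⟩
    rcases h with ⟨rfl, hza⟩ | ⟨hjk, hza, -⟩
    · exact ⟨i.lt_succ_self, hza, Or.inr rfl⟩
    · exact ⟨by omega, hza, Or.inr rfl⟩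

theorem pathShape_of_leT {k j : ℕ} {z w : Ordinal} (hz : z ∈ (S.r k).A \ S.D)
    (hw : w ∈ (S.r j).A \ S.D) (h : S.leT z w) : S.PathShape k z j w := by
  rw [leT_iff_reflTransGen] at h
  suffices ∃ i, w ∈ (S.r i).A ∧ S.PathShape k z i w by
    obtain ⟨i, hwi, hshape⟩ := this
    rwa [S.index_eq hw hwi]
  obtain ⟨-, hw⟩ := hw
  induction h with
  | refl => exact ⟨k, hz.1, Or.inl ⟨rfl, Or.inr rfl⟩⟩
  | tail _ hstep ih =>
    have hu := fun hu => hw (S.mem_D_of_stepT hu hstep)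
    obtain ⟨i, hui, hshape⟩ := ih hu
    exact hshape.stepT ⟨hui, hu⟩ hstep

end Amalg

/-- Lemma 7(i): for `m < n`, `y ∈ Aₘ ∖ D`, `x ∈ Aₙ ∖ D`: if `x <_t y` then
`x ≤ₙ aⁿₙ` and `bᵐₘ ≤ₘ y`; if `x` and `y` are compatible in `<_t` then `bᵐₘ ≤ₘ y`. -/
theorem stmt6 (S : Amalg) (m n : ℕ) (hmn : m < n)
    (y : Ordinal) (hy : y ∈ (S.r m).A \ S.D)
    (x : Ordinal) (hx : x ∈ (S.r n).A \ S.D) :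
    (S.ltT x y → (S.r n).leR x (S.c n (2 * n)) ∧ (S.r m).leR (S.c m (2 * m + 1)) y) ∧
    (S.CompatT x y → (S.r m).leR (S.c m (2 * m + 1)) y) := by
  refine ⟨fun hxy => ?_, fun ⟨z, hz, hzx, hzy⟩ => ?_⟩
  · rcases S.pathShape_of_leT hx hy (Or.inl hxy) with ⟨rfl, -⟩ | ⟨-, hxa, hby⟩
    · omega
    · exact ⟨hxa, hby⟩
  · obtain ⟨k, hzk⟩ := mem_iUnion.mp hz
    have hzD : z ∉ S.D := fun hzD => hy.2 (S.mem_D_of_leT hzD hzy)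
    have hnk := (S.pathShape_of_leT ⟨hzk, hzD⟩ hx hzx).index_le
    rcases S.pathShape_of_leT ⟨hzk, hzD⟩ hy hzy with ⟨rfl, -⟩ | ⟨-, -, hby⟩
    · omega
    · exact hby
end
end
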